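/- For every k ≥ 1, aw(P_3 □ P_{2k}, 3) = 4; that is, every exact 4-coloring of the grid P_3 □ P_{2k} contains a rainbow 3-AP, while some exact 3-coloring does not. -/

import Mathlib

open SimpleGraph

/-- `v` lists the vertices of a `k`-term arithmetic progression in `G`:
consecutive vertices are at a common distance `d`. -/
def IsAPIn {V : Type*} (G : SimpleGraph V) (k : ℕ) (v : Fin k → V) : Prop :=
  ∃ d : ℕ, ∀ (i : ℕ) (h : i + 1 < k),
    G.dist (v ⟨i, by omega⟩) (v ⟨i + 1, h⟩) = d

/-- The coloring `c` admits a rainbow `k`-AP in `G`: a `k`-AP whose vertices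
are pairwise distinct and receive pairwise distinct colors. -/
def HasRainbowAP {V α : Type*} (G : SimpleGraph V) (k : ℕ) (c : V → α) : Prop :=
  ∃ v : Fin k → V, IsAPIn G k v ∧ Function.Injective (c ∘ v)

/-- The anti-van der Waerden number `aw(G,k)`: the least positive `r` such that
every exact `r`-coloring of `G` contains a rainbow `k`-AP.  (For `r = |V(G)|+1`
there is no surjection onto `r` colors, so the defining set is nonempty and
`aw(G,k) ≤ |V(G)|+1` automatically, matching the convention.) -/
noncomputable def aw {V : Type*} [Fintype V] (G : SimpleGraph V) (k : ℕ) : ℕ :=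
  sInf {r : ℕ | 0 < r ∧ ∀ c : V → Fin r, Function.Surjective c → HasRainbowAP G k c}

/-!
In `ℕ`-coordinates the distance of `P₃ □ Pₘ` is the taxicab distance. For even `m`, color the
corners `A = (0, 0)` and `B = (2, m - 1)` with two colors of their own and every other cell with a
third. A rainbow 3-AP would contain `A`, `B` and a third cell `w`; but `B` is the only cell at
distance `m + 1` from `A` and vice versa, and `d(A, w) + d(w, B) = m + 1` is odd, so `w` cannot be
the middle term either.

Conversely, a rainbow-free coloring of the `3 × m` grid (`m ≥ 2`) with at least three colors has
exactly this corner shape (with either diagonal), hence only three colors. This goes by induction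
on `m`, with the case `m = 2` checked exhaustively. In the step, a corner-colored `3 × (m - 1)`
block together with the extra column always contains a rainbow 3-AP, so both `3 × (m - 1)` blocks
use at most two colors. Their common middle columns are therefore monochromatic, the other two
colors live in the two end columns, and a few explicit 3-APs pin them to opposite corners.
-/

namespace SimpleGraph

variable {V W : Type*}

theorem dist_boxProd {G : SimpleGraph V} {H : SimpleGraph W} (hG : G.Preconnected)
    (hH : H.Preconnected) (x y : V × W) :
    (G □ H).dist x y = G.dist x.1 y.1 + H.dist x.2 y.2 := by
  have hGH : (G □ H).Reachable x y := reachable_boxProd.2 ⟨hG _ _, hH _ _⟩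
  have := edist_boxProd (G := G) (H := H) x y
  rw [← hGH.coe_dist_eq_edist, ← (hG x.1 y.1).coe_dist_eq_edist,
    ← (hH x.2 y.2).coe_dist_eq_edist] at this
  exact_mod_cast this

theorem Walk.dist_le_length_of_pathGraph {n : ℕ} {i j : Fin n} (w : (pathGraph n).Walk i j) :
    Nat.dist i j ≤ w.length := by
  induction w with
  | nil => simp
  | cons h _ ih =>
    rw [Walk.length_cons]
    rcases pathGraph_adj.1 h with h | h <;> simp only [Nat.dist] at ih ⊢ <;> omega

theorem pathGraph_dist_le_of_add_eq {n : ℕ} :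
    ∀ (d : ℕ) (i j : Fin n), i.val + d = j → (pathGraph n).dist i j ≤ d
  | 0, i, j, h => by
    obtain rfl : i = j := Fin.ext (by simpa using h)
    simp
  | d + 1, i, j, h => by
    let i' : Fin n := ⟨i + 1, by omega⟩
    have hadj : (pathGraph n).Adj i i' := pathGraph_adj.2 (.inl rfl)
    calc (pathGraph n).dist i j ≤ (pathGraph n).dist i i' + (pathGraph n).dist i' j :=
          hadj.reachable.dist_triangle_left j
      _ ≤ 1 + d := by
          rw [dist_eq_one_iff_adj.2 hadj]
          exact Nat.add_le_add_left (pathGraph_dist_le_of_add_eq d i' j (by simp [i']; omega)) 1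
      _ = d + 1 := by ring

theorem pathGraph_dist {n : ℕ} (i j : Fin n) : (pathGraph n).dist i j = Nat.dist i j := by
  refine le_antisymm ?_ ?_
  · rcases le_total i.val j with h | h
    · exact pathGraph_dist_le_of_add_eq _ i j (by simp only [Nat.dist]; omega)
    · rw [dist_comm, Nat.dist_comm]
      exact pathGraph_dist_le_of_add_eq _ j i (by simp only [Nat.dist]; omega)
  · obtain ⟨w, hw⟩ := (pathGraph_preconnected n i j).exists_walk_length_eq_dist
    exact hw ▸ w.dist_le_length_of_pathGraph

theorem dist_pathGraph_boxProd {m n : ℕ} (x y : Fin m × Fin n) :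
    (pathGraph m □ pathGraph n).dist x y = Nat.dist x.1 y.1 + Nat.dist x.2 y.2 := by
  rw [dist_boxProd (pathGraph_preconnected m) (pathGraph_preconnected n), pathGraph_dist,
    pathGraph_dist]

end SimpleGraph

section RainbowAP

variable {V α β : Type*} {G : SimpleGraph V}

theorem hasRainbowAP_three_iff {c : V → α} :
    HasRainbowAP G 3 c ↔
      ∃ x y z, G.dist x y = G.dist y z ∧ c x ≠ c y ∧ c y ≠ c z ∧ c x ≠ c z := by
  constructor
  · rintro ⟨v, ⟨d, hd⟩, hinj⟩
    refine ⟨v 0, v 1, v 2, (hd 0 (by norm_num)).trans (hd 1 (by norm_num)).symm, ?_, ?_, ?_⟩ <;>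
      exact fun h => absurd (hinj h) (by decide)
  · rintro ⟨x, y, z, hd, hxy, hyz, hxz⟩
    refine ⟨![x, y, z], ⟨G.dist x y, fun i hi => ?_⟩, ?_⟩
    · obtain rfl | rfl : i = 0 ∨ i = 1 := by omega
      exacts [rfl, hd.symm]
    · intro i j h
      fin_cases i <;> fin_cases j <;> simp_all [eq_comm]

theorem HasRainbowAP.of_comp {k : ℕ} {c : V → α} (f : α → β) (h : HasRainbowAP G k (f ∘ c)) :
    HasRainbowAP G k c :=
  let ⟨v, hv, hinj⟩ := h
  ⟨v, hv, Function.Injective.of_comp (f := f) hinj⟩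

theorem aw_eq_of [Fintype V] {k r : ℕ} (hr : 0 < r)
    (hup : ∀ c : V → Fin r, Function.Surjective c → HasRainbowAP G k c)
    (hlow : ∀ s, 0 < s → s < r → ∃ c : V → Fin s, Function.Surjective c ∧ ¬HasRainbowAP G k c) :
    aw G k = r := by
  refine le_antisymm (Nat.sInf_le ⟨hr, hup⟩) (le_csInf ⟨r, hr, hup⟩ ?_)
  rintro s ⟨hs, hsup⟩
  by_contra! hsr
  obtain ⟨c, hc, hno⟩ := hlow s hs hsr
  exact hno (hsup c hc)

end RainbowAP

section ThreeColored

variable {β α : Type*}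

def ThreeColored (c : β → α) (S : Set β) : Prop :=
  ∃ x ∈ S, ∃ y ∈ S, ∃ z ∈ S, c x ≠ c y ∧ c y ≠ c z ∧ c x ≠ c z

variable {c : β → α} {S T U : Set β}

theorem eq_or_eq_of_not_threeColored (h : ¬ThreeColored c S) {x y z : β} (hx : x ∈ S)
    (hy : y ∈ S) (hz : z ∈ S) (hxy : c x ≠ c y) : c z = c x ∨ c z = c y := by
  by_contra! hz'
  exact h ⟨x, hx, y, hy, z, hz, hxy, fun e => hz'.2 e.symm, fun e => hz'.1 e.symm⟩

theorem ThreeColored.exists_ne_ne (h : ThreeColored c S) (u v : α) :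
    ∃ w ∈ S, c w ≠ u ∧ c w ≠ v := by
  obtain ⟨x, hx, y, hy, z, hz, hxy, hyz, hxz⟩ := h
  by_contra! H
  have := H x hx; have := H y hy; have := H z hz
  by_cases c x = u <;> by_cases c y = u <;> grind

theorem ThreeColored.eq_of_mem_inter (h : ThreeColored c U) (hU : U ⊆ S ∪ T)
    (hS : ¬ThreeColored c S) (hT : ¬ThreeColored c T) {x y : β} (hx : x ∈ S ∩ T)
    (hy : y ∈ S ∩ T) : c x = c y := by
  by_contra hxy
  obtain ⟨w, hw, hwx, hwy⟩ := h.exists_ne_ne (c x) (c y)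
  rcases hU hw with hw | hw
  · exact hS ⟨x, hx.1, y, hy.1, w, hw, hxy, fun e => hwy e.symm, fun e => hwx e.symm⟩
  · exact hT ⟨x, hx.2, y, hy.2, w, hw, hxy, fun e => hwy e.symm, fun e => hwx e.symm⟩

theorem ThreeColored.exists_of_mem_inter (h : ThreeColored c U) (hU : U ⊆ S ∪ T)
    (hS : ¬ThreeColored c S) (hT : ¬ThreeColored c T) {w : β} (hw : w ∈ S ∩ T) :
    ∃ u ∈ S, ∃ v ∈ T, c u ≠ c w ∧ c v ≠ c w ∧ c u ≠ c v := by
  obtain ⟨u, hu, hu', -⟩ := h.exists_ne_ne (c w) (c w)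
  obtain ⟨v, hv, hvw, hvu⟩ := h.exists_ne_ne (c w) (c u)
  rcases hU hu with hu | hu <;> rcases hU hv with hv | hv
  · exact absurd ⟨u, hu, w, hw.1, v, hv, hu', fun e => hvw e.symm, fun e => hvu e.symm⟩ hS
  · exact ⟨u, hu, v, hv, hu', hvw, fun e => hvu e.symm⟩
  · exact ⟨v, hv, u, hu, hvw, hu', hvu⟩
  · exact absurd ⟨u, hu, w, hw.2, v, hv, hu', fun e => hvw e.symm, fun e => hvu e.symm⟩ hT

theorem ThreeColored.comp_of_subset_image {γ : Type*} {f : γ → β} {S : Set γ}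
    (h : ThreeColored c T) (hT : T ⊆ f '' S) : ThreeColored (c ∘ f) S := by
  obtain ⟨x, hx, y, hy, z, hz, hxy, hyz, hxz⟩ := h
  obtain ⟨x', hx', rfl⟩ := hT hx
  obtain ⟨y', hy', rfl⟩ := hT hy
  obtain ⟨z', hz', rfl⟩ := hT hz
  exact ⟨x', hx', y', hy', z', hz', hxy, hyz, hxz⟩

end ThreeColored

namespace ThreeRowGrid

variable {α : Type*}

def grid (m : ℕ) : Set (ℕ × ℕ) := {x | x.1 < 3 ∧ x.2 < m}

@[simp]
theorem mem_grid {m : ℕ} {x : ℕ × ℕ} : x ∈ grid m ↔ x.1 < 3 ∧ x.2 < m := Iff.rfl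

def gridDist (x y : ℕ × ℕ) : ℕ := Nat.dist x.1 y.1 + Nat.dist x.2 y.2

def IsRainbowFree (m : ℕ) (c : ℕ × ℕ → α) : Prop :=
  ∀ x y z : ℕ × ℕ, x ∈ grid m ∧ y ∈ grid m ∧ z ∈ grid m ∧ gridDist x y = gridDist y z →
    c x = c y ∨ c y = c z ∨ c x = c z

theorem hasRainbowAP_iff_not_isRainbowFree (m : ℕ) (c : ℕ × ℕ → α) :
    HasRainbowAP (pathGraph 3 □ pathGraph m) 3 (fun x => c (x.1, x.2)) ↔
      ¬IsRainbowFree m c := by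
  simp only [hasRainbowAP_three_iff, SimpleGraph.dist_pathGraph_boxProd, IsRainbowFree,
    not_forall, not_or]
  constructor
  · rintro ⟨x, y, z, hd, h⟩
    exact ⟨(x.1, x.2), (y.1, y.2), (z.1, z.2),
      ⟨⟨x.1.2, x.2.2⟩, ⟨y.1.2, y.2.2⟩, ⟨z.1.2, z.2.2⟩, hd⟩, h⟩
  · rintro ⟨x, y, z, ⟨hx, hy, hz, hd⟩, h⟩
    exact ⟨(⟨x.1, hx.1⟩, ⟨x.2, hx.2⟩), (⟨y.1, hy.1⟩, ⟨y.2, hy.2⟩), (⟨z.1, hz.1⟩, ⟨z.2, hz.2⟩),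
      hd, h⟩

def IsCornerColoring (m : ℕ) (c : ℕ × ℕ → α) : Prop :=
  ∃ a p, (a = 0 ∨ a = 2) ∧ c (a, 0) ≠ p ∧ c (2 - a, m - 1) ≠ p ∧ c (a, 0) ≠ c (2 - a, m - 1) ∧
    ∀ x ∈ grid m, x ≠ (a, 0) → x ≠ (2 - a, m - 1) → c x = p

theorem IsRainbowFree.mono {m m' : ℕ} {c : ℕ × ℕ → α} (hc : IsRainbowFree m' c) (h : m ≤ m') :
    IsRainbowFree m c := fun x y z ⟨hx, hy, hz, hd⟩ =>
  hc x y z ⟨⟨hx.1, hx.2.trans_le h⟩, ⟨hy.1, hy.2.trans_le h⟩, ⟨hz.1, hz.2.trans_le h⟩, hd⟩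

theorem IsRainbowFree.shift {m : ℕ} {c : ℕ × ℕ → α} (hc : IsRainbowFree (m + 1) c) :
    IsRainbowFree m (fun x => c (x.1, x.2 + 1)) := by
  intro x y z ⟨hx, hy, hz, hd⟩
  apply hc
  simp only [mem_grid, gridDist, Nat.dist] at hx hy hz hd ⊢
  omega

theorem IsRainbowFree.not_isCornerColoring_left {n : ℕ} {c : ℕ × ℕ → α} (hn : 2 ≤ n)
    (hc : IsRainbowFree (n + 1) c) : ¬IsCornerColoring n c := by
  rintro ⟨a, p, ha, hq, hr, hqr, hp⟩
  have h₁ := hc (1, n) (a, 0) (2 - a, n - 1) (by simp [gridDist, Nat.dist]; omega)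
  have h₂ := hc (2 - a, n - 1) (1, n - 1) (1, n) (by simp [gridDist, Nat.dist]; omega)
  have h₃ := hc (2 - a, 0) (1, n) (a, 0) (by simp [gridDist, Nat.dist]; omega)
  rw [hp (1, n - 1) ⟨by omega, by omega⟩ (by simp; omega) (by simp; omega)] at h₂
  rw [hp (2 - a, 0) ⟨by omega, by omega⟩ (by simp; omega) (by simp; omega)] at h₃
  grind

theorem IsRainbowFree.not_isCornerColoring_right {n : ℕ} {c : ℕ × ℕ → α} (hn : 2 ≤ n)
    (hc : IsRainbowFree (n + 1) c) : ¬IsCornerColoring n (fun x => c (x.1, x.2 + 1)) := by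
  rintro ⟨a, p, ha, hq, hr, hqr, hp⟩
  simp only [zero_add, Nat.sub_add_cancel (by omega : 1 ≤ n)] at hq hr hqr
  have h₁ := hc (1, 0) (2 - a, n) (a, 1) (by simp [gridDist, Nat.dist]; omega)
  have h₂ := hc (a, 1) (1, 1) (1, 0) (by simp [gridDist, Nat.dist]; omega)
  have h₃ := hc (a, n) (1, 0) (2 - a, n) (by simp [gridDist, Nat.dist]; omega)
  have e₂ := hp (1, 0) ⟨by omega, by omega⟩ (by simp; omega) (by simp; omega)
  have e₃ := hp (a, n - 1) ⟨by omega, by omega⟩ (by simp; omega) (by simp; omega)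
  simp only [zero_add, Nat.sub_add_cancel (by omega : 1 ≤ n)] at e₂ e₃
  rw [e₂] at h₂
  rw [e₃] at h₃
  grind

theorem IsRainbowFree.opposite_corners {n : ℕ} {c : ℕ × ℕ → α} {p : α} (hn : 2 ≤ n)
    (hc : IsRainbowFree (n + 1) c) (hmid : ∀ i j, i < 3 → 1 ≤ j → j < n → c (i, j) = p)
    {a a' : ℕ} (ha : a < 3) (ha' : a' < 3) (hq : c (a, 0) ≠ p) (hr : c (a', n) ≠ p)
    (hqr : c (a, 0) ≠ c (a', n)) : a ≠ 1 ∧ a' = 2 - a := by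
  by_contra h
  interval_cases a <;> interval_cases a' <;> try omega
  · have := hc (1, n - 1) (0, 0) (0, n) (by simp [gridDist, Nat.dist]; omega)
    have := hmid 1 (n - 1) (by omega) (by omega) (by omega)
    grind
  · have := hc (2, n - 1) (0, 0) (1, n) (by simp [gridDist, Nat.dist]; omega)
    have := hmid 2 (n - 1) (by omega) (by omega) (by omega)
    grind
  · have := hc (2, 1) (0, n) (1, 0) (by simp [gridDist, Nat.dist]; omega)
    have := hmid 2 1 (by omega) (by omega) (by omega)
    grind
  · have := hc (0, n - 1) (1, 0) (1, n) (by simp [gridDist, Nat.dist]; omega)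
    have := hmid 0 (n - 1) (by omega) (by omega) (by omega)
    grind
  · have := hc (0, 1) (2, n) (1, 0) (by simp [gridDist, Nat.dist]; omega)
    have := hmid 0 1 (by omega) (by omega) (by omega)
    grind
  · have := hc (0, n - 1) (2, 0) (1, n) (by simp [gridDist, Nat.dist]; omega)
    have := hmid 0 (n - 1) (by omega) (by omega) (by omega)
    grind
  · have := hc (1, n - 1) (2, 0) (2, n) (by simp [gridDist, Nat.dist]; omega)
    have := hmid 1 (n - 1) (by omega) (by omega) (by omega)
    grind

theorem IsRainbowFree.isCornerColoring_succ {n : ℕ} {c : ℕ × ℕ → α} (hn : 2 ≤ n)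
    (hc : IsRainbowFree (n + 1) c) (h3 : ThreeColored c (grid (n + 1)))
    (hL : ¬ThreeColored c (grid n)) (hR : ¬ThreeColored c {x | x.1 < 3 ∧ 1 ≤ x.2 ∧ x.2 ≤ n}) :
    IsCornerColoring (n + 1) c := by
  set R : Set (ℕ × ℕ) := {x | x.1 < 3 ∧ 1 ≤ x.2 ∧ x.2 ≤ n}
  have hcover : grid (n + 1) ⊆ grid n ∪ R := fun x hx => by
    by_cases h : x.2 < n
    · exact .inl ⟨hx.1, h⟩
    · exact .inr ⟨hx.1, by omega, by simp at hx; omega⟩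
  have hmem : ∀ i j, i < 3 → 1 ≤ j → j < n → (i, j) ∈ grid n ∩ R := fun i j hi h1 h2 =>
    ⟨⟨hi, h2⟩, hi, h1, h2.le⟩
  have h11 := hmem 1 1 (by omega) le_rfl (by omega)
  set p := c (1, 1)
  have hmid : ∀ i j, i < 3 → 1 ≤ j → j < n → c (i, j) = p := fun i j hi h1 h2 =>
    h3.eq_of_mem_inter hcover hL hR (hmem i j hi h1 h2) h11
  obtain ⟨⟨a, b⟩, ⟨ha, hb⟩, ⟨a', b'⟩, ⟨ha', hb'⟩, hq, hr, hqr⟩ :=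
    h3.exists_of_mem_inter hcover hL hR h11
  obtain rfl : b = 0 := by_contra fun h => hq (hmid a b ha (by omega) hb)
  have hb'n : b' = n := by_contra fun h => hr (hmid a' b' ha' (by simp at hb'; omega) (by omega))
  subst b'
  obtain ⟨ha1, rfl⟩ := hc.opposite_corners hn hmid ha ha' hq hr hqr
  have hcol₀ : ∀ i < 3, c (i, 0) = p ∨ c (i, 0) = c (a, 0) := fun i hi =>
    eq_or_eq_of_not_threeColored hL h11.1 ⟨ha, by omega⟩ ⟨hi, by omega⟩ (Ne.symm hq)
  have hcolₙ : ∀ i < 3, c (i, n) = p ∨ c (i, n) = c (2 - a, n) := fun i hi =>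
    eq_or_eq_of_not_threeColored hR h11.2 ⟨ha', by omega⟩ ⟨hi, by omega, le_rfl⟩ (Ne.symm hr)
  refine ⟨a, p, by omega, hq, by simpa using hr, by simpa using hqr, ?_⟩
  rintro ⟨i, j⟩ ⟨hi, hj⟩ hia hib
  simp only [ne_eq, Prod.mk.injEq, add_tsub_cancel_right] at hia hib
  by_cases hj0 : j = 0
  · subst hj0
    refine (hcol₀ i hi).resolve_right fun h => hia ⟨?_, rfl⟩
    have := (hc.opposite_corners hn hmid hi ha' (h ▸ hq) hr (h ▸ hqr)).2
    omega
  by_cases hjn : j = n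
  · subst hjn
    refine (hcolₙ i hi).resolve_right fun h => hib ⟨?_, rfl⟩
    have := (hc.opposite_corners hn hmid ha hi hq (h ▸ hr) (h ▸ hqr)).2
    omega
  exact hmid i j hi (by omega) (by omega)

set_option synthInstance.maxSize 1000 in
/-- The hypotheses say that seven particular 3-APs of the `3 × 2` grid are not rainbow, `cᵢⱼ`
being the color of `(i, j)`. -/
theorem fin4_two_colors_or_corner : ∀ c₀₀ c₀₁ c₁₀ c₁₁ c₂₀ c₂₁ : Fin 4,
    (c₀₀ = c₀₁ ∨ c₀₁ = c₁₁ ∨ c₀₀ = c₁₁) →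
    (c₀₀ = c₁₀ ∨ c₁₀ = c₂₀ ∨ c₀₀ = c₂₀) →
    (c₀₁ = c₁₀ ∨ c₁₀ = c₂₁ ∨ c₀₁ = c₂₁) →
    (c₁₁ = c₂₁ ∨ c₂₁ = c₂₀ ∨ c₁₁ = c₂₀) →
    (c₀₀ = c₁₁ ∨ c₁₁ = c₂₀ ∨ c₀₀ = c₂₀) →
    (c₀₁ = c₀₀ ∨ c₀₀ = c₁₀ ∨ c₀₁ = c₁₀) →
    (c₁₀ = c₁₁ ∨ c₁₁ = c₂₁ ∨ c₁₀ = c₂₁) →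
    (∃ p q : Fin 4, (c₀₀ = p ∨ c₀₀ = q) ∧ (c₀₁ = p ∨ c₀₁ = q) ∧ (c₁₀ = p ∨ c₁₀ = q) ∧
      (c₁₁ = p ∨ c₁₁ = q) ∧ (c₂₀ = p ∨ c₂₀ = q) ∧ (c₂₁ = p ∨ c₂₁ = q)) ∨
    (c₀₁ = c₁₀ ∧ c₁₁ = c₁₀ ∧ c₂₀ = c₁₀ ∧ c₀₀ ≠ c₁₀ ∧ c₂₁ ≠ c₁₀ ∧ c₀₀ ≠ c₂₁) ∨
    (c₀₀ = c₁₀ ∧ c₁₁ = c₁₀ ∧ c₂₁ = c₁₀ ∧ c₂₀ ≠ c₁₀ ∧ c₀₁ ≠ c₁₀ ∧ c₂₀ ≠ c₀₁) := by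
  decide

theorem isCornerColoring_two {c : ℕ × ℕ → Fin 4} (hc : IsRainbowFree 2 c)
    (h3 : ThreeColored c (grid 2)) : IsCornerColoring 2 c := by
  rcases fin4_two_colors_or_corner _ _ _ _ _ _
      (hc (0, 0) (0, 1) (1, 1) (by simp [gridDist, Nat.dist]))
      (hc (0, 0) (1, 0) (2, 0) (by simp [gridDist, Nat.dist]))
      (hc (0, 1) (1, 0) (2, 1) (by simp [gridDist, Nat.dist]))
      (hc (1, 1) (2, 1) (2, 0) (by simp [gridDist, Nat.dist]))
      (hc (0, 0) (1, 1) (2, 0) (by simp [gridDist, Nat.dist]))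
      (hc (0, 1) (0, 0) (1, 0) (by simp [gridDist, Nat.dist]))
      (hc (1, 0) (1, 1) (2, 1) (by simp [gridDist, Nat.dist])) with ⟨p, q, h⟩ | h | h
  · obtain ⟨x, hx, y, hy, z, hz, hxy, hyz, hxz⟩ := h3
    have hpq : ∀ w ∈ grid 2, c w = p ∨ c w = q := by
      rintro ⟨i, j⟩ ⟨hi, hj⟩
      interval_cases i <;> interval_cases j <;> tauto
    have := hpq x hx; have := hpq y hy; have := hpq z hz
    grind
  · refine ⟨0, c (1, 0), .inl rfl, h.2.2.2.1, h.2.2.2.2.1, h.2.2.2.2.2, ?_⟩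
    rintro ⟨i, j⟩ ⟨hi, hj⟩ h₁ h₂
    interval_cases i <;> interval_cases j <;> simp_all
  · refine ⟨2, c (1, 0), .inr rfl, h.2.2.2.1, h.2.2.2.2.1, h.2.2.2.2.2, ?_⟩
    rintro ⟨i, j⟩ ⟨hi, hj⟩ h₁ h₂
    interval_cases i <;> interval_cases j <;> simp_all

theorem isCornerColoring_of_threeColored {m : ℕ} (hm : 2 ≤ m) {c : ℕ × ℕ → Fin 4}
    (hc : IsRainbowFree m c) (h3 : ThreeColored c (grid m)) : IsCornerColoring m c := by
  induction m, hm using Nat.le_induction generalizing c with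
  | base => exact isCornerColoring_two hc h3
  | succ n hn ih =>
    refine hc.isCornerColoring_succ hn h3 (fun hL => ?_) (fun hR => ?_)
    · exact hc.not_isCornerColoring_left hn (ih (hc.mono n.le_succ) hL)
    · refine hc.not_isCornerColoring_right hn (ih hc.shift (hR.comp_of_subset_image ?_))
      rintro ⟨i, j⟩ ⟨hi, hj, hjn⟩
      exact ⟨(i, j - 1), ⟨hi, by omega⟩, by simp; omega⟩

theorem IsCornerColoring.exists_colors {m : ℕ} {c : ℕ × ℕ → α} (h : IsCornerColoring m c) :
    ∃ p q r, ∀ x ∈ grid m, c x = p ∨ c x = q ∨ c x = r := by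
  obtain ⟨a, p, -, -, -, -, hp⟩ := h
  refine ⟨p, c (a, 0), c (2 - a, m - 1), fun x hx => ?_⟩
  by_cases h₁ : x = (a, 0)
  · exact .inr (.inl (h₁ ▸ rfl))
  by_cases h₂ : x = (2 - a, m - 1)
  · exact .inr (.inr (h₂ ▸ rfl))
  exact .inl (hp x hx h₁ h₂)

theorem hasRainbowAP_of_surjective {m : ℕ} (hm : 2 ≤ m) (c : Fin 3 × Fin m → Fin 4)
    (hc : Function.Surjective c) : HasRainbowAP (pathGraph 3 □ pathGraph m) 3 c := by
  let c' : ℕ × ℕ → Fin 4 := fun x =>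
    if h : x.1 < 3 ∧ x.2 < m then c (⟨x.1, h.1⟩, ⟨x.2, h.2⟩) else 0
  have hc' : ∀ x : Fin 3 × Fin m, c' (x.1, x.2) = c x := fun x => dif_pos ⟨x.1.2, x.2.2⟩
  have hcc' : c = fun x => c' (x.1, x.2) := funext fun x => (hc' x).symm
  rw [hcc', hasRainbowAP_iff_not_isRainbowFree]
  intro hfree
  obtain ⟨x, hx⟩ := hc 0
  obtain ⟨y, hy⟩ := hc 1
  obtain ⟨z, hz⟩ := hc 2
  have h3 : ThreeColored c' (grid m) := ⟨(x.1, x.2), ⟨x.1.2, x.2.2⟩, (y.1, y.2), ⟨y.1.2, y.2.2⟩,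
    (z.1, z.2), ⟨z.1.2, z.2.2⟩, by simp [hc', hx, hy, hz]⟩
  obtain ⟨p, q, r, hpqr⟩ := (isCornerColoring_of_threeColored hm hfree h3).exists_colors
  obtain ⟨s, hs⟩ : ∃ s : Fin 4, s ≠ p ∧ s ≠ q ∧ s ≠ r := by
    clear hpqr; revert p q r; decide
  obtain ⟨w, rfl⟩ := hc s
  have := hpqr (w.1, w.2) ⟨w.1.2, w.2.2⟩
  rw [hc'] at this
  tauto

def cornerColoring (m : ℕ) (x : ℕ × ℕ) : Fin 3 :=
  if x.1 = 0 ∧ x.2 = 0 then 1 else if x.1 = 2 ∧ x.2 + 1 = m then 2 else 0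

theorem isRainbowFree_cornerColoring {m : ℕ} (hm : Even m) :
    IsRainbowFree m (cornerColoring m) := by
  rintro ⟨x₁, x₂⟩ ⟨y₁, y₂⟩ ⟨z₁, z₂⟩ ⟨hx, hy, hz, hd⟩
  obtain ⟨k, rfl⟩ := hm
  simp only [cornerColoring, mem_grid, gridDist, Nat.dist] at *
  split_ifs <;> simp <;> omega

theorem exists_surjective_not_hasRainbowAP {m s : ℕ} (hm : Even m) (hm0 : 0 < m) (hs : 0 < s)
    (hs3 : s ≤ 3) : ∃ c : Fin 3 × Fin m → Fin s,
      Function.Surjective c ∧ ¬HasRainbowAP (pathGraph 3 □ pathGraph m) 3 c := by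
  let f : Fin 3 → Fin s := fun i => ⟨min i (s - 1), by omega⟩
  have hf : Function.Surjective f := fun j => ⟨⟨j, by omega⟩, Fin.ext (by simp [f]; omega)⟩
  have hκ : Function.Surjective fun x : Fin 3 × Fin m => cornerColoring m (x.1, x.2) := by
    intro i
    fin_cases i
    · exact ⟨(1, ⟨0, hm0⟩), by simp [cornerColoring]⟩
    · exact ⟨(0, ⟨0, hm0⟩), by simp [cornerColoring]⟩
    · exact ⟨(2, ⟨m - 1, by omega⟩), by simp [cornerColoring]; omega⟩
  refine ⟨f ∘ fun x => cornerColoring m (x.1, x.2), hf.comp hκ, fun h => ?_⟩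
  exact (hasRainbowAP_iff_not_isRainbowFree m _).1 (h.of_comp f) (isRainbowFree_cornerColoring hm)

end ThreeRowGrid

/-- for every `k ≥ 1`, `aw(P_3 □ P_{2k}, 3) = 4`. -/
theorem aw_p3_peven (k : ℕ) (hk : 1 ≤ k) :
    aw (pathGraph 3 □ pathGraph (2 * k)) 3 = 4 :=
  aw_eq_of (by norm_num) (ThreeRowGrid.hasRainbowAP_of_surjective (by omega)) fun _ hs hs4 =>
    ThreeRowGrid.exists_surjective_not_hasRainbowAP (even_two_mul k) (by omega) hs (by omega)
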